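/- arXiv:1803.09118 — 2 statements merged into one kernel-verified Lean document; each statement's English description precedes it below -/
import Mathlib

section
/- Let n ≥ 3 and κ > 0. Define p(λ) := Σ_{i≠j} (λᵢλⱼ − κ)² and q(λ) := Σᵢ (λᵢ Σ_{j≠i} λⱼ − (n−1)κ)² for λ ∈ ℝⁿ. Then p(λ) = 0 if and only if q(λ) = 0, and the common zero set equals {√κ·(1,…,1), −√κ·(1,…,1)}. -/
/-- For `κ > 0`, the polynomials `p(λ) = ∑_{i≠j} (λᵢλⱼ - κ)²` and
`q(λ) = ∑ᵢ (λᵢ ∑_{j≠i} λⱼ - (n-1)κ)²` have the same zeros, namely `±√κ·(1,…,1)`. -/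
theorem stmt_2 (n : ℕ) (hn : 3 ≤ n) (κ : ℝ) (hκ : 0 < κ) (lam : Fin n → ℝ) :
    ((∑ i, ∑ j ∈ Finset.univ.erase i, (lam i * lam j - κ) ^ 2 = 0) ↔
      (∑ i, (lam i * ∑ j ∈ Finset.univ.erase i, lam j - (n - 1 : ℝ) * κ) ^ 2 = 0)) ∧
    ((∑ i, ∑ j ∈ Finset.univ.erase i, (lam i * lam j - κ) ^ 2 = 0) ↔
      ((∀ j, lam j = Real.sqrt κ) ∨ (∀ j, lam j = -Real.sqrt κ))) := by
  have hn3 : (3:ℝ) ≤ (n:ℝ) := by exact_mod_cast hn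
  set S := ∑ i, lam i with hS
  -- p = 0 iff all products are κ
  have hp : (∑ i, ∑ j ∈ Finset.univ.erase i, (lam i * lam j - κ) ^ 2 = 0) ↔
      ∀ i, ∀ j ∈ Finset.univ.erase i, lam i * lam j = κ := by
    rw [Finset.sum_eq_zero_iff_of_nonneg
      (fun i _ => Finset.sum_nonneg fun j _ => sq_nonneg _)]
    constructor
    · intro h i j hj
      have h0 := (Finset.sum_eq_zero_iff_of_nonneg (fun j _ => sq_nonneg _)).mp
        (h i (Finset.mem_univ i)) j hj
      have := pow_eq_zero_iff (two_ne_zero) |>.mp h0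
      exact sub_eq_zero.mp this
    · intro h i _
      apply Finset.sum_eq_zero
      intro j hj
      rw [h i j hj]; ring
  -- q = 0 iff all row sums
  have hq : (∑ i, (lam i * ∑ j ∈ Finset.univ.erase i, lam j - (n - 1 : ℝ) * κ) ^ 2 = 0) ↔
      ∀ i, lam i * ∑ j ∈ Finset.univ.erase i, lam j = ((n:ℝ)-1)*κ := by
    rw [Finset.sum_eq_zero_iff_of_nonneg (fun i _ => sq_nonneg _)]
    constructor
    · intro h i
      have h0 := h i (Finset.mem_univ i)
      have := pow_eq_zero_iff (two_ne_zero) |>.mp h0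
      exact sub_eq_zero.mp this
    · intro h i _
      rw [h i]; ring
  have herase : ∀ i, ∑ j ∈ Finset.univ.erase i, lam j = S - lam i := fun i =>
    Finset.sum_erase_eq_sub (Finset.mem_univ i)
  -- P implies Q
  have hPQ : (∀ i, ∀ j ∈ Finset.univ.erase i, lam i * lam j = κ) →
      ∀ i, lam i * ∑ j ∈ Finset.univ.erase i, lam j = ((n:ℝ)-1)*κ := by
    intro h i
    rw [Finset.mul_sum, Finset.sum_congr rfl (fun j hj => h i j hj), Finset.sum_const,
      Finset.card_erase_of_mem (Finset.mem_univ i), Finset.card_univ, Fintype.card_fin,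
      nsmul_eq_mul, Nat.cast_sub (by omega : 1 ≤ n), Nat.cast_one]
  -- Q implies constant ±√κ
  have hQconst : (∀ i, lam i * ∑ j ∈ Finset.univ.erase i, lam j = ((n:ℝ)-1)*κ) →
      (∀ j, lam j = Real.sqrt κ) ∨ (∀ j, lam j = -Real.sqrt κ) := by
    intro h
    have h1 : ∀ i, lam i * (S - lam i) = ((n:ℝ)-1)*κ := fun i => by
      rw [← herase i]; exact h i
    have hpair : ∀ i j, lam i ≠ lam j → S = lam i + lam j := by
      intro i j hij
      have e := (h1 i).trans (h1 j).symm
      have hsub : lam i - lam j ≠ 0 := sub_ne_zero.mpr hij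
      have hmul : (lam i - lam j) * (S - (lam i + lam j)) = 0 := by linear_combination e
      rcases mul_eq_zero.mp hmul with h' | h'
      · exact absurd h' hsub
      · linarith
    have hall : ∀ i j, lam i = lam j := by
      by_contra hc
      push_neg at hc
      obtain ⟨i, j, hij⟩ := hc
      have hSrr : S = lam i + lam j := hpair i j hij
      have hrr' : lam i * lam j = ((n:ℝ)-1)*κ := by
        have := h1 i; rw [hSrr] at this; linear_combination this
      have hrrpos : 0 < lam i * lam j := by rw [hrr']; nlinarith
      have hvals : ∀ k, lam k = lam i ∨ lam k = lam j := by
        intro k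
        by_cases hk : lam k = lam i
        · exact Or.inl hk
        · right
          have := hpair i k (fun he => hk he.symm)
          linarith
      set A := Finset.univ.filter (fun k => lam k = lam i) with hA
      have hiA : i ∈ A := by simp [hA]
      have hjA : j ∈ Aᶜ := by
        simp only [hA, Finset.mem_compl, Finset.mem_filter, Finset.mem_univ, true_and]
        exact fun h' => hij h'.symm
      have hAsum : ∑ k ∈ A, lam k = (A.card : ℝ) * lam i := by
        rw [Finset.sum_congr rfl (fun k hk => (Finset.mem_filter.mp hk).2),
          Finset.sum_const, nsmul_eq_mul]
      have hAcsum : ∑ k ∈ Aᶜ, lam k = ((Aᶜ).card : ℝ) * lam j := by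
        have hv : ∀ k ∈ Aᶜ, lam k = lam j := by
          intro k hk
          have hk' : k ∉ A := Finset.mem_compl.mp hk
          rcases hvals k with h' | h'
          · exact absurd (by simp [hA, h']) hk'
          · exact h'
        rw [Finset.sum_congr rfl hv, Finset.sum_const, nsmul_eq_mul]
      have hsum : S = (A.card : ℝ) * lam i + ((Aᶜ).card : ℝ) * lam j := by
        rw [hS, ← Finset.sum_add_sum_compl A lam, hAsum, hAcsum]
      have hcards : A.card + Aᶜ.card = n := by
        rw [Finset.card_add_card_compl, Fintype.card_fin]
      have ha1 : 1 ≤ (A.card : ℝ) := by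
        exact_mod_cast Finset.card_pos.mpr ⟨i, hiA⟩
      have hb1 : 1 ≤ ((Aᶜ).card : ℝ) := by
        exact_mod_cast Finset.card_pos.mpr ⟨j, hjA⟩
      have hcard3 : (3:ℝ) ≤ (A.card : ℝ) + ((Aᶜ).card : ℝ) := by
        have : ((A.card + Aᶜ.card : ℕ) : ℝ) = (n:ℝ) := by exact_mod_cast congrArg Nat.cast hcards
        push_cast at this
        linarith
      have heq : ((A.card : ℝ) - 1) * lam i + (((Aᶜ).card : ℝ) - 1) * lam j = 0 := by
        linear_combination hSrr - hsum
      have e1 : ((A.card : ℝ) - 1) * (lam i * lam i)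
          + (((Aᶜ).card : ℝ) - 1) * (lam i * lam j) = 0 := by
        linear_combination heq * lam i
      have e2 : ((A.card : ℝ) - 1) * (lam i * lam j)
          + (((Aᶜ).card : ℝ) - 1) * (lam j * lam j) = 0 := by
        linear_combination heq * lam j
      have t1 : 0 ≤ ((A.card : ℝ) - 1) * (lam i * lam i) :=
        mul_nonneg (by linarith) (mul_self_nonneg _)
      have t2 : 0 ≤ (((Aᶜ).card : ℝ) - 1) * (lam i * lam j) :=
        mul_nonneg (by linarith) hrrpos.le
      have t3 : 0 ≤ ((A.card : ℝ) - 1) * (lam i * lam j) :=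
        mul_nonneg (by linarith) hrrpos.le
      have t4 : 0 ≤ (((Aᶜ).card : ℝ) - 1) * (lam j * lam j) :=
        mul_nonneg (by linarith) (mul_self_nonneg _)
      have hbz : (((Aᶜ).card : ℝ) - 1) * (lam i * lam j) = 0 := by linarith
      have haz : ((A.card : ℝ) - 1) * (lam i * lam j) = 0 := by linarith
      have hbone : ((Aᶜ).card : ℝ) - 1 = 0 :=
        (mul_eq_zero.mp hbz).resolve_right (ne_of_gt hrrpos)
      have haone : ((A.card : ℝ) - 1) = 0 :=
        (mul_eq_zero.mp haz).resolve_right (ne_of_gt hrrpos)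
      linarith
    -- all equal; deduce value
    have i0 : Fin n := ⟨0, by omega⟩
    have hSn : S = (n:ℝ) * lam i0 := by
      rw [hS, Finset.sum_congr rfl (fun k _ => hall k i0), Finset.sum_const,
        Finset.card_univ, Fintype.card_fin, nsmul_eq_mul]
    have hc2 : lam i0 ^ 2 = κ := by
      have e := h1 i0
      rw [hSn] at e
      have hne : ((n:ℝ) - 1) ≠ 0 := by linarith
      have : ((n:ℝ) - 1) * (lam i0 ^ 2 - κ) = 0 := by linear_combination e
      have := (mul_eq_zero.mp this).resolve_left hne
      linarith
    have habs : |lam i0| = Real.sqrt κ := by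
      rw [← Real.sqrt_sq_eq_abs, hc2]
    rcases (abs_eq (Real.sqrt_nonneg κ)).mp habs with h' | h'
    · exact Or.inl (fun j => (hall j i0).trans h')
    · exact Or.inr (fun j => (hall j i0).trans h')
  -- constant implies P
  have hconstP : ((∀ j, lam j = Real.sqrt κ) ∨ (∀ j, lam j = -Real.sqrt κ)) →
      ∀ i, ∀ j ∈ Finset.univ.erase i, lam i * lam j = κ := by
    rintro (h | h) i j _
    · rw [h i, h j, Real.mul_self_sqrt hκ.le]
    · rw [h i, h j, neg_mul_neg, Real.mul_self_sqrt hκ.le]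
  refine ⟨⟨fun hp0 => hq.mpr (hPQ (hp.mp hp0)), fun hq0 => ?_⟩,
    fun hp0 => hQconst (hPQ (hp.mp hp0)), fun h => hp.mpr (hconstP h)⟩
  exact hp.mpr (hconstP (hQconst (hq.mp hq0)))
end

section
/- For λ ∈ ℝⁿ near e₁, writing μ := λ − e₁ and κ = 0, one has p(e₁+μ) = 2 Σ_{j=2}ⁿ μⱼ² + O(|μ|³) and q(e₁+μ) = Σ_{j=2}ⁿ μⱼ² + (Σ_{j=2}ⁿ μⱼ)² + O(|μ|³), where p(λ) = Σ_{i≠j}(λᵢλⱼ)² and q(λ) = Σᵢ(λᵢΣ_{j≠i}λⱼ)². In particular the ratio p/q is bounded above and below by positive constants in a punctured neighborhood of e₁. -/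
open Finset

private lemma aux_p {n : ℕ} (f : Fin n → ℝ) :
    ∑ i, ∑ j ∈ Finset.univ.erase i, (f i * f j) ^ 2
      = (∑ i, f i ^ 2) ^ 2 - ∑ i, f i ^ 4 := by
  have h : ∀ i : Fin n, ∑ j ∈ Finset.univ.erase i, (f i * f j) ^ 2
      = f i ^ 2 * ((∑ j, f j ^ 2) - f i ^ 2) := by
    intro i
    rw [← Finset.sum_erase_eq_sub (Finset.mem_univ i), Finset.mul_sum]
    exact Finset.sum_congr rfl fun j _ => by ring
  rw [Finset.sum_congr rfl fun i _ => h i]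
  simp_rw [mul_sub]
  rw [Finset.sum_sub_distrib, ← Finset.sum_mul, sq (∑ i, f i ^ 2)]
  congr 1
  exact Finset.sum_congr rfl fun i _ => by ring

private lemma key_p {n : ℕ} (e : Fin n) (f g : Fin n → ℝ)
    (he : f e = 1 + g e) (hne : ∀ i, i ≠ e → f i = g i) :
    ∑ i, ∑ j ∈ Finset.univ.erase i, (f i * f j) ^ 2
      = 2 * (1 + g e) ^ 2 * (∑ j ∈ Finset.univ.erase e, g j ^ 2)
        + (∑ j ∈ Finset.univ.erase e, g j ^ 2) ^ 2
        - (∑ j ∈ Finset.univ.erase e, g j ^ 4) := by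
  have h2 : ∑ i, f i ^ 2 = (1 + g e) ^ 2 + ∑ j ∈ Finset.univ.erase e, g j ^ 2 := by
    rw [← Finset.add_sum_erase _ _ (Finset.mem_univ e), he]
    congr 1
    exact Finset.sum_congr rfl fun i hi => by rw [hne i (Finset.ne_of_mem_erase hi)]
  have h4 : ∑ i, f i ^ 4 = (1 + g e) ^ 4 + ∑ j ∈ Finset.univ.erase e, g j ^ 4 := by
    rw [← Finset.add_sum_erase _ _ (Finset.mem_univ e), he]
    congr 1
    exact Finset.sum_congr rfl fun i hi => by rw [hne i (Finset.ne_of_mem_erase hi)]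
  rw [aux_p, h2, h4]; ring

private lemma key_q {n : ℕ} (e : Fin n) (f g : Fin n → ℝ)
    (he : f e = 1 + g e) (hne : ∀ i, i ≠ e → f i = g i) :
    ∑ i, (f i * ∑ j ∈ Finset.univ.erase i, f j) ^ 2
      = ((1 + g e) * (∑ j ∈ Finset.univ.erase e, g j)) ^ 2
        + ∑ i ∈ Finset.univ.erase e, (g i * (1 + (∑ j, g j) - g i)) ^ 2 := by
  have hS : ∑ j, f j = 1 + ∑ j, g j := by
    rw [← Finset.add_sum_erase _ f (Finset.mem_univ e),
      ← Finset.add_sum_erase _ g (Finset.mem_univ e), he,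
      Finset.sum_congr rfl fun i hi => hne i (Finset.ne_of_mem_erase hi)]
    ring
  have h1 : ∀ i : Fin n, ∑ j ∈ Finset.univ.erase i, f j = (1 + ∑ j, g j) - f i := by
    intro i
    rw [Finset.sum_erase_eq_sub (Finset.mem_univ i), hS]
  rw [Finset.sum_congr rfl fun i _ => by rw [h1 i]]
  rw [← Finset.add_sum_erase _ (fun i => (f i * ((1 + ∑ j, g j) - f i)) ^ 2) (Finset.mem_univ e),
    he]
  have ht : ∑ j ∈ Finset.univ.erase e, g j = (∑ j, g j) - g e :=
    Finset.sum_erase_eq_sub (Finset.mem_univ e)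
  congr 1
  · rw [ht]; ring
  · exact Finset.sum_congr rfl fun i hi => by rw [hne i (Finset.ne_of_mem_erase hi)]

private lemma sq_near_one {u : ℝ} (h : |u| ≤ 1/3) :
    1/4 ≤ (1 + u) ^ 2 ∧ (1 + u) ^ 2 ≤ 2 := by
  obtain ⟨h1, h2⟩ := abs_le.mp h
  constructor <;> nlinarith

private lemma sq_expand_bound {u K : ℝ} (h1 : |u| ≤ K) (h2 : |u| ≤ 1/3) :
    |(1 + u) ^ 2 - 1| ≤ 3 * K := by
  obtain ⟨a, b⟩ := abs_le.mp h1
  obtain ⟨c, d⟩ := abs_le.mp h2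
  rw [abs_le]
  constructor <;> nlinarith

private lemma p_taylor {x A2 A4 r N : ℝ} (hxl : -r ≤ x) (hxu : x ≤ r) (hx2 : x ^ 2 ≤ r ^ 2)
    (hr0 : 0 ≤ r) (hr1 : r ≤ 1/12) (hA2nn : 0 ≤ A2) (hA2 : A2 ≤ r ^ 2)
    (hA4nn : 0 ≤ A4) (hA4 : A4 ≤ A2 ^ 2) (hN : 3 ≤ N) :
    |2 * (1 + x) ^ 2 * A2 + A2 ^ 2 - A4 - 2 * A2| ≤ 20 * N ^ 2 * r ^ 3 := by
  have hr3 : 0 ≤ r ^ 3 := by positivity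
  have h180 : 180 * r ^ 3 ≤ 20 * N ^ 2 * r ^ 3 := by
    nlinarith [mul_nonneg (by nlinarith : (0:ℝ) ≤ 20 * N ^ 2 - 180) hr3]
  rw [abs_le]
  constructor
  · nlinarith [mul_le_mul_of_nonneg_left hA2 hr0,
      mul_nonneg (by linarith : (0:ℝ) ≤ x + r) hA2nn,
      mul_nonneg (sq_nonneg x) hA2nn]
  · nlinarith [mul_le_mul_of_nonneg_left hA2 hr0,
      mul_nonneg (by linarith : (0:ℝ) ≤ r - x) hA2nn,
      mul_le_mul_of_nonneg_right hx2 hA2nn,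
      mul_le_mul_of_nonneg_right hA2 hA2nn,
      mul_le_mul_of_nonneg_left hA2 (mul_nonneg hr0 hr0),
      mul_le_mul_of_nonneg_left hr1 hr3]

private lemma q_taylor {x t A2 Sq N r : ℝ} (hN : 3 ≤ N) (hr0 : 0 ≤ r)
    (hxl : -r ≤ x) (hxu : x ≤ r) (hr1 : r ≤ 1/12)
    (hA2nn : 0 ≤ A2) (hA2 : A2 ≤ r ^ 2)
    (ht2 : t ^ 2 ≤ N * r ^ 2)
    (hSq : |Sq - A2| ≤ 3 * (N * r + r) * A2) :
    |((1 + x) * t) ^ 2 + Sq - (A2 + t ^ 2)| ≤ 20 * N ^ 2 * r ^ 3 := by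
  have h3r : |(1 + x) ^ 2 - 1| ≤ 3 * r := by
    rw [abs_le]; constructor <;> nlinarith
  rw [show ((1 + x) * t) ^ 2 + Sq - (A2 + t ^ 2)
      = ((1 + x) ^ 2 - 1) * t ^ 2 + (Sq - A2) from by ring]
  have e0 : |((1 + x) ^ 2 - 1) * t ^ 2 + (Sq - A2)|
      ≤ |(1 + x) ^ 2 - 1| * t ^ 2 + |Sq - A2| := by
    refine le_trans (abs_add_le _ _) ?_
    rw [abs_mul, abs_of_nonneg (sq_nonneg t)]
  have e1 : |(1 + x) ^ 2 - 1| * t ^ 2 ≤ 3 * r * t ^ 2 :=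
    mul_le_mul_of_nonneg_right h3r (sq_nonneg t)
  have e2 : 3 * r * t ^ 2 ≤ 3 * r * (N * r ^ 2) :=
    mul_le_mul_of_nonneg_left ht2 (by positivity)
  have hNr : 0 ≤ N * r + r := by nlinarith
  have e4 : 3 * (N * r + r) * A2 ≤ 3 * (N * r + r) * r ^ 2 :=
    mul_le_mul_of_nonneg_left hA2 (by positivity)
  have e5 : 3 * r * (N * r ^ 2) + 3 * (N * r + r) * r ^ 2 = (6 * N + 3) * r ^ 3 := by ring
  have e6 : (6 * N + 3) * r ^ 3 ≤ 20 * N ^ 2 * r ^ 3 := by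
    have h9 : (0:ℝ) ≤ 20 * N ^ 2 - 6 * N - 3 := by nlinarith
    nlinarith [mul_nonneg h9 (by positivity : (0:ℝ) ≤ r ^ 3)]
  linarith

private lemma ratio_final {x t A2 A4 Sq N r : ℝ}
    (hN : 3 ≤ N) (hr0 : 0 ≤ r) (hr1 : r ≤ 1/12)
    (hA2nn : 0 ≤ A2) (hA2 : A2 ≤ r ^ 2) (hA4nn : 0 ≤ A4) (hA4 : A4 ≤ A2 ^ 2)
    (ht2 : t ^ 2 ≤ N * A2)
    (hSq_lb : A2 / 4 ≤ Sq) (hSq_ub : Sq ≤ 2 * A2)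
    (hx14 : 1/4 ≤ (1 + x) ^ 2) (hx2' : (1 + x) ^ 2 ≤ 2) :
    (1 / (8 * N)) * (((1 + x) * t) ^ 2 + Sq) ≤ 2 * (1 + x) ^ 2 * A2 + A2 ^ 2 - A4 ∧
    2 * (1 + x) ^ 2 * A2 + A2 ^ 2 - A4 ≤ 20 * (((1 + x) * t) ^ 2 + Sq) := by
  have hNpos : (0:ℝ) < N := by linarith
  have hq_ub : ((1 + x) * t) ^ 2 + Sq ≤ 4 * N * A2 := by
    have h1 : ((1 + x) * t) ^ 2 ≤ 2 * t ^ 2 := by nlinarith [sq_nonneg t]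
    have h4 : (0:ℝ) ≤ (N - 1) * A2 := mul_nonneg (by linarith) hA2nn
    nlinarith
  have hp_lb : A2 / 2 ≤ 2 * (1 + x) ^ 2 * A2 + A2 ^ 2 - A4 := by
    nlinarith [mul_le_mul_of_nonneg_right hx14 hA2nn]
  have hp_ub : 2 * (1 + x) ^ 2 * A2 + A2 ^ 2 - A4 ≤ 5 * A2 := by
    have hA2one : A2 ≤ 1 := by nlinarith
    nlinarith [mul_le_mul_of_nonneg_right hx2' hA2nn,
      mul_le_mul_of_nonneg_right hA2one hA2nn]
  constructor
  · have hmul : (1 / (8 * N)) * (4 * N * A2) = A2 / 2 := by field_simp; ring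
    have h8 : (0:ℝ) ≤ 1 / (8 * N) := by positivity
    have hh := mul_le_mul_of_nonneg_left hq_ub h8
    rw [hmul] at hh
    linarith
  · have hq_lb : A2 / 4 ≤ ((1 + x) * t) ^ 2 + Sq := by
      nlinarith [sq_nonneg ((1 + x) * t)]
    linarith

set_option maxHeartbeats 1000000 in
private lemma est {n : ℕ} (hn : 3 ≤ n) (e : Fin n) (μ : EuclideanSpace ℝ (Fin n))
    (hμ : ‖μ‖ ≤ 1 / (4 * (n : ℝ))) (f : Fin n → ℝ)
    (he : f e = 1 + μ e) (hne : ∀ i, i ≠ e → f i = μ i) :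
    |(∑ i, ∑ j ∈ Finset.univ.erase i, (f i * f j) ^ 2) -
        2 * ∑ j ∈ Finset.univ.erase e, (μ j) ^ 2| ≤ 20 * (n : ℝ) ^ 2 * ‖μ‖ ^ 3 ∧
    |(∑ i, (f i * ∑ j ∈ Finset.univ.erase i, f j) ^ 2) -
        ((∑ j ∈ Finset.univ.erase e, (μ j) ^ 2) + (∑ j ∈ Finset.univ.erase e, μ j) ^ 2)|
      ≤ 20 * (n : ℝ) ^ 2 * ‖μ‖ ^ 3 ∧
    (1 / (8 * (n : ℝ))) * (∑ i, (f i * ∑ j ∈ Finset.univ.erase i, f j) ^ 2)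
      ≤ (∑ i, ∑ j ∈ Finset.univ.erase i, (f i * f j) ^ 2) ∧
    (∑ i, ∑ j ∈ Finset.univ.erase i, (f i * f j) ^ 2)
      ≤ 20 * ∑ i, (f i * ∑ j ∈ Finset.univ.erase i, f j) ^ 2 := by
  have hn3 : (3 : ℝ) ≤ (n : ℝ) := by exact_mod_cast hn
  have hnpos : (0 : ℝ) < n := by linarith
  have hr0 : (0 : ℝ) ≤ ‖μ‖ := norm_nonneg μ
  have hfs : (n : ℝ) * (1 / (4 * (n : ℝ))) = 1 / 4 := by field_simp
  have hnr : (n : ℝ) * ‖μ‖ ≤ 1 / 4 :=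
    le_trans (mul_le_mul_of_nonneg_left hμ hnpos.le) (le_of_eq hfs)
  have hr1 : ‖μ‖ ≤ 1 / 12 := by
    nlinarith [mul_nonneg (by linarith : (0:ℝ) ≤ (n : ℝ) - 3) hr0]
  have hsq : ‖μ‖ ^ 2 = ∑ i, μ i ^ 2 := by
    rw [EuclideanSpace.norm_eq, Real.sq_sqrt (by positivity)]
    exact Finset.sum_congr rfl fun i _ => by rw [Real.norm_eq_abs, sq_abs]
  have hsqle : ∀ i, μ i ^ 2 ≤ ‖μ‖ ^ 2 := fun i => by
    rw [hsq]
    exact Finset.single_le_sum (fun j _ => sq_nonneg (μ j)) (Finset.mem_univ i)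
  have habs : ∀ i, |μ i| ≤ ‖μ‖ := by
    intro i
    have h2 := Real.sqrt_le_sqrt (hsqle i)
    rwa [Real.sqrt_sq_eq_abs, Real.sqrt_sq hr0] at h2
  have hA2nn : (0:ℝ) ≤ ∑ j ∈ Finset.univ.erase e, μ j ^ 2 :=
    Finset.sum_nonneg fun j _ => sq_nonneg _
  have hA2 : ∑ j ∈ Finset.univ.erase e, μ j ^ 2 ≤ ‖μ‖ ^ 2 := by
    rw [hsq]
    exact Finset.sum_le_sum_of_subset_of_nonneg (Finset.subset_univ _)
      fun i _ _ => sq_nonneg _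
  have hA4nn : (0:ℝ) ≤ ∑ j ∈ Finset.univ.erase e, μ j ^ 4 :=
    Finset.sum_nonneg fun j _ => by positivity
  have hA4 : ∑ j ∈ Finset.univ.erase e, μ j ^ 4
      ≤ (∑ j ∈ Finset.univ.erase e, μ j ^ 2) ^ 2 := by
    calc ∑ j ∈ Finset.univ.erase e, μ j ^ 4
        = ∑ j ∈ Finset.univ.erase e, (μ j ^ 2) ^ 2 :=
          Finset.sum_congr rfl fun j _ => by ring
      _ ≤ _ := Finset.sum_sq_le_sq_sum_of_nonneg fun i _ => sq_nonneg _
  have hcard : ((Finset.univ.erase e).card : ℝ) ≤ (n : ℝ) := by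
    have h := Finset.card_le_univ (Finset.univ.erase e)
    rw [Fintype.card_fin] at h
    exact_mod_cast h
  have ht2 : (∑ j ∈ Finset.univ.erase e, μ j) ^ 2
      ≤ (n : ℝ) * ∑ j ∈ Finset.univ.erase e, μ j ^ 2 :=
    le_trans sq_sum_le_card_mul_sum_sq (mul_le_mul_of_nonneg_right hcard hA2nn)
  have ht2' : (∑ j ∈ Finset.univ.erase e, μ j) ^ 2 ≤ (n : ℝ) * ‖μ‖ ^ 2 :=
    le_trans ht2 (mul_le_mul_of_nonneg_left hA2 hnpos.le)
  have hs : |∑ j, μ j| ≤ (n : ℝ) * ‖μ‖ := by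
    calc |∑ j, μ j| ≤ ∑ j, |μ j| := Finset.abs_sum_le_sum_abs _ _
      _ ≤ ∑ _j : Fin n, ‖μ‖ := Finset.sum_le_sum fun j _ => habs j
      _ = (n : ℝ) * ‖μ‖ := by
          rw [Finset.sum_const, Finset.card_univ, Fintype.card_fin, nsmul_eq_mul]
  obtain ⟨hxl, hxu⟩ := abs_le.mp (habs e)
  obtain ⟨hsl, hsu⟩ := abs_le.mp hs
  have hui : ∀ i, |(∑ j, μ j) - μ i| ≤ (n : ℝ) * ‖μ‖ + ‖μ‖ := by
    intro i
    obtain ⟨h1, h2⟩ := abs_le.mp (habs i)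
    rw [abs_le]; constructor <;> linarith
  have hu3 : ∀ i, |(∑ j, μ j) - μ i| ≤ 1 / 3 := fun i => le_trans (hui i) (by linarith)
  -- facts about the inner q-sum
  have hSq_abs : |(∑ i ∈ Finset.univ.erase e, (μ i * (1 + (∑ j, μ j) - μ i)) ^ 2)
        - ∑ j ∈ Finset.univ.erase e, μ j ^ 2|
      ≤ 3 * ((n : ℝ) * ‖μ‖ + ‖μ‖) * ∑ j ∈ Finset.univ.erase e, μ j ^ 2 := by
    rw [← Finset.sum_sub_distrib]
    calc |∑ i ∈ Finset.univ.erase e, ((μ i * (1 + (∑ j, μ j) - μ i)) ^ 2 - μ i ^ 2)|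
        ≤ ∑ i ∈ Finset.univ.erase e, |(μ i * (1 + (∑ j, μ j) - μ i)) ^ 2 - μ i ^ 2| :=
          Finset.abs_sum_le_sum_abs _ _
      _ ≤ ∑ i ∈ Finset.univ.erase e, 3 * ((n : ℝ) * ‖μ‖ + ‖μ‖) * μ i ^ 2 := by
          refine Finset.sum_le_sum fun i _ => ?_
          have hb := sq_expand_bound (hui i) (hu3 i)
          calc |(μ i * (1 + (∑ j, μ j) - μ i)) ^ 2 - μ i ^ 2|
              = μ i ^ 2 * |(1 + ((∑ j, μ j) - μ i)) ^ 2 - 1| := by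
                rw [show (μ i * (1 + (∑ j, μ j) - μ i)) ^ 2 - μ i ^ 2
                    = μ i ^ 2 * ((1 + ((∑ j, μ j) - μ i)) ^ 2 - 1) from by ring]
                rw [abs_mul, abs_of_nonneg (sq_nonneg (μ i))]
            _ ≤ μ i ^ 2 * (3 * ((n : ℝ) * ‖μ‖ + ‖μ‖)) :=
                mul_le_mul_of_nonneg_left hb (sq_nonneg _)
            _ = 3 * ((n : ℝ) * ‖μ‖ + ‖μ‖) * μ i ^ 2 := mul_comm _ _
      _ = 3 * ((n : ℝ) * ‖μ‖ + ‖μ‖) * ∑ j ∈ Finset.univ.erase e, μ j ^ 2 := by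
          rw [← Finset.mul_sum]
  have hSq_lb : (∑ j ∈ Finset.univ.erase e, μ j ^ 2) / 4
      ≤ ∑ i ∈ Finset.univ.erase e, (μ i * (1 + (∑ j, μ j) - μ i)) ^ 2 := by
    rw [Finset.sum_div]
    refine Finset.sum_le_sum fun i _ => ?_
    calc μ i ^ 2 / 4 = μ i ^ 2 * (1/4) := by ring
      _ ≤ μ i ^ 2 * (1 + ((∑ j, μ j) - μ i)) ^ 2 :=
          mul_le_mul_of_nonneg_left (sq_near_one (hu3 i)).1 (sq_nonneg _)
      _ = (μ i * (1 + (∑ j, μ j) - μ i)) ^ 2 := by ring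
  have hSq_ub : ∑ i ∈ Finset.univ.erase e, (μ i * (1 + (∑ j, μ j) - μ i)) ^ 2
      ≤ 2 * ∑ j ∈ Finset.univ.erase e, μ j ^ 2 := by
    rw [Finset.mul_sum]
    refine Finset.sum_le_sum fun i _ => ?_
    calc (μ i * (1 + (∑ j, μ j) - μ i)) ^ 2
        = μ i ^ 2 * (1 + ((∑ j, μ j) - μ i)) ^ 2 := by ring
      _ ≤ μ i ^ 2 * 2 :=
          mul_le_mul_of_nonneg_left (sq_near_one (hu3 i)).2 (sq_nonneg _)
      _ = 2 * μ i ^ 2 := mul_comm _ _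
  have h1x := sq_near_one (u := μ e) (le_trans (habs e) (by linarith))
  have hrat := ratio_final (x := μ e) (t := ∑ j ∈ Finset.univ.erase e, μ j)
    (Sq := ∑ i ∈ Finset.univ.erase e, (μ i * (1 + (∑ j, μ j) - μ i)) ^ 2)
    hn3 hr0 hr1 hA2nn hA2 hA4nn hA4 ht2 hSq_lb hSq_ub h1x.1 h1x.2
  rw [key_p e f (fun i => μ i) he hne, key_q e f (fun i => μ i) he hne]
  exact ⟨p_taylor hxl hxu (hsqle e) hr0 hr1 hA2nn hA2 hA4nn hA4 hn3,
    q_taylor hn3 hr0 hxl hxu hr1 hA2nn hA2 ht2' hSq_abs,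
    hrat.1, hrat.2⟩

/-- Taylor expansion of the curvature polynomials (`κ = 0`) at `e₁`:
`p(e₁+μ) = 2 ∑_{j≥2} μⱼ² + O(|μ|³)`, `q(e₁+μ) = ∑_{j≥2} μⱼ² + (∑_{j≥2} μⱼ)² + O(|μ|³)`;
consequently `p/q` is bounded above and below by positive constants in a punctured
neighborhood of `e₁`. -/
theorem stmt_4 (n : ℕ) (hn : 3 ≤ n) :
    ∃ C > (0 : ℝ), ∃ δ > (0 : ℝ),
      (∀ μ : EuclideanSpace ℝ (Fin n), ‖μ‖ ≤ δ →
        (let e₁ : Fin n := ⟨0, by omega⟩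
         let lam : Fin n → ℝ := fun j => (if j = e₁ then 1 else 0) + μ j
         |(∑ i, ∑ j ∈ Finset.univ.erase i, (lam i * lam j) ^ 2) -
            2 * ∑ j ∈ Finset.univ.erase e₁, (μ j) ^ 2| ≤ C * ‖μ‖ ^ 3 ∧
         |(∑ i, (lam i * ∑ j ∈ Finset.univ.erase i, lam j) ^ 2) -
            ((∑ j ∈ Finset.univ.erase e₁, (μ j) ^ 2) +
              (∑ j ∈ Finset.univ.erase e₁, μ j) ^ 2)| ≤ C * ‖μ‖ ^ 3)) ∧
      (∃ c₁ > (0 : ℝ), ∃ c₂ > (0 : ℝ),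
        ∀ μ : EuclideanSpace ℝ (Fin n), μ ≠ 0 → ‖μ‖ ≤ δ →
          (let e₁ : Fin n := ⟨0, by omega⟩
           let lam : Fin n → ℝ := fun j => (if j = e₁ then 1 else 0) + μ j
           c₁ * (∑ i, (lam i * ∑ j ∈ Finset.univ.erase i, lam j) ^ 2)
              ≤ (∑ i, ∑ j ∈ Finset.univ.erase i, (lam i * lam j) ^ 2) ∧
           (∑ i, ∑ j ∈ Finset.univ.erase i, (lam i * lam j) ^ 2)
              ≤ c₂ * ∑ i, (lam i * ∑ j ∈ Finset.univ.erase i, lam j) ^ 2)) := by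
  have hn0 : (0:ℝ) < (n : ℝ) := by exact_mod_cast (by omega : 0 < n)
  refine ⟨20 * (n : ℝ) ^ 2, mul_pos (by norm_num) (pow_pos hn0 2),
    1 / (4 * (n : ℝ)), one_div_pos.mpr (by linarith), ?_, ?_⟩
  · intro μ hμ
    have h := est hn ⟨0, by omega⟩ μ hμ
      (fun j => (if j = (⟨0, by omega⟩ : Fin n) then 1 else 0) + μ j)
      (by simp) (fun i hi => by simp [hi])
    exact ⟨h.1, h.2.1⟩
  · refine ⟨1 / (8 * (n : ℝ)), one_div_pos.mpr (by linarith), 20, by norm_num, ?_⟩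
    intro μ _ hμ
    have h := est hn ⟨0, by omega⟩ μ hμ
      (fun j => (if j = (⟨0, by omega⟩ : Fin n) then 1 else 0) + μ j)
      (by simp) (fun i hi => by simp [hi])
    exact ⟨h.2.2.1, h.2.2.2⟩
end
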